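/- Every subgroup H of Ḡ whose index d satisfies 2 ≤ d ≤ 16 has normal closure equal to the whole group Ḡ, i.e. the smallest normal subgroup of Ḡ containing H is Ḡ itself. -/

import Mathlib

namespace Stmt9

def a : FreeGroup (Fin 2) := FreeGroup.of 0
def b : FreeGroup (Fin 2) := FreeGroup.of 1

/-- The two relators of `π₁(W̄) = ⟨a,b | a³b²AB³Ab², (ab)²aB²Ab²AB²⟩`. -/
def rels : Set (FreeGroup (Fin 2)) :=
  { a^3 * b^2 * a⁻¹ * (b⁻¹)^3 * a⁻¹ * b^2,
    (a * b)^2 * a * (b⁻¹)^2 * a⁻¹ * b^2 * a⁻¹ * (b⁻¹)^2 }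

/-- The fundamental group `Ḡ = π₁(W̄)` of the manifold mediating the Akbulut h-cobordism. -/
abbrev Gbar := PresentedGroup rels

/-! ### Auxiliary lemmas -/

/-- In a commutative group, the two relators of `Ḡ` force both generators to be trivial. -/
lemma comm_aux {A : Type*} [CommGroup A] {x y : A}
    (e1 : x^3 * y^2 * x⁻¹ * (y⁻¹)^3 * x⁻¹ * y^2 = 1)
    (e2 : (x * y)^2 * x * (y⁻¹)^2 * x⁻¹ * y^2 * x⁻¹ * (y⁻¹)^2 = 1) :
    x = 1 ∧ y = 1 := by
  have h1 := congrArg Additive.ofMul e1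
  have h2 := congrArg Additive.ofMul e2
  simp only [ofMul_mul, ofMul_pow, ofMul_inv, ofMul_one] at h1 h2
  have hx : Additive.ofMul x = 0 := by rw [← h2]; abel
  have hxy : Additive.ofMul x + Additive.ofMul y = 0 := by rw [← h1]; abel
  have hy : Additive.ofMul y = 0 := by
    have := hxy; rw [hx, zero_add] at this; exact this
  exact ⟨by simpa using hx, by simpa using hy⟩

/-- Any homomorphism from `Ḡ` to a commutative group is trivial. -/
lemma hom_to_comm_trivial {A : Type*} [CommGroup A] (φ : Gbar →* A) (g : Gbar) : φ g = 1 := by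
  set ψ : FreeGroup (Fin 2) →* A := φ.comp (PresentedGroup.mk rels) with hψ
  have hrel : ∀ r ∈ rels, PresentedGroup.mk rels r = 1 := by
    intro r hr
    exact (QuotientGroup.eq_one_iff r).mpr (Subgroup.subset_normalClosure hr)
  set x := ψ a with hx
  set y := ψ b with hy
  have e1 : x^3 * y^2 * x⁻¹ * (y⁻¹)^3 * x⁻¹ * y^2 = 1 := by
    have : ψ (a^3 * b^2 * a⁻¹ * (b⁻¹)^3 * a⁻¹ * b^2) = 1 := by
      rw [hψ, MonoidHom.comp_apply, hrel _ (by left; rfl), map_one]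
    simpa only [map_mul, map_pow, map_inv] using this
  have e2 : (x * y)^2 * x * (y⁻¹)^2 * x⁻¹ * y^2 * x⁻¹ * (y⁻¹)^2 = 1 := by
    have : ψ ((a * b)^2 * a * (b⁻¹)^2 * a⁻¹ * b^2 * a⁻¹ * (b⁻¹)^2) = 1 := by
      rw [hψ, MonoidHom.comp_apply, hrel _ (by right; rfl), map_one]
    simpa only [map_mul, map_pow, map_inv] using this
  obtain ⟨hx1, hy1⟩ := comm_aux e1 e2
  have : g ∈ φ.ker := by
    refine PresentedGroup.generated_by rels φ.ker (fun j => ?_) g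
    fin_cases j
    · exact hx1
    · exact hy1
  exact this

/-- A solvable group whose commutator subgroup is everything is a subsingleton. -/
lemma subsingleton_of_solvable_perfect (Q : Type*) [Group Q] [Group.IsSolvable Q]
    (h : commutator Q = ⊤) : Subsingleton Q := by
  have hall : ∀ n, derivedSeries Q n = ⊤ := by
    intro n
    induction n with
    | zero => exact derivedSeries_zero Q
    | succ n ih => rw [derivedSeries_succ, ih]; exact h
  obtain ⟨n, hn⟩ := (isSolvable_def Q).mp ‹Group.IsSolvable Q›
  have : (⊤ : Subgroup Q) = ⊥ := by rw [← hall n, hn]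
  refine ⟨fun p q => ?_⟩
  have hp : p ∈ (⊥ : Subgroup Q) := this ▸ Subgroup.mem_top p
  have hq : q ∈ (⊥ : Subgroup Q) := this ▸ Subgroup.mem_top q
  rw [Subgroup.mem_bot] at hp hq
  rw [hp, hq]

/-- A group whose order is a prime power is solvable. -/
lemma solvable_of_card_prime_pow {p n : ℕ} (hp : p.Prime) (G : Type*) [Group G]
    (h : Nat.card G = p ^ n) : Group.IsSolvable G := by
  haveI : Fact p.Prime := ⟨hp⟩
  haveI : Finite G := Nat.finite_of_card_ne_zero (h ▸ (pow_pos hp.pos n).ne')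
  haveI := (IsPGroup.of_card h).isNilpotent
  infer_instance

/-- A group of order `p * q` with `p < q` primes is solvable. -/
lemma solvable_of_card_pq {p q : ℕ} (hp : p.Prime) (hq : q.Prime) (hlt : p < q)
    (G : Type*) [Group G] (h : Nat.card G = p * q) : Group.IsSolvable G := by
  haveI : Fact q.Prime := ⟨hq⟩
  haveI : Finite G := Nat.finite_of_card_ne_zero (h ▸ (Nat.mul_pos hp.pos hq.pos).ne')
  obtain ⟨P⟩ : Nonempty (Sylow q G) := Sylow.nonempty
  have hne : p ≠ q := hlt.ne
  have hcardP : Nat.card P = q := by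
    rw [Sylow.card_eq_multiplicity, h, Nat.factorization_mul hp.pos.ne' hq.pos.ne',
      hp.factorization, hq.factorization]
    simp [Finsupp.single_apply, hne]
  have hindex : (P : Subgroup G).index = p := by
    have hmul := (P : Subgroup G).card_mul_index
    rw [show Nat.card (P : Subgroup G) = q from hcardP, h] at hmul
    have : q * (P : Subgroup G).index = q * p := by rw [hmul]; ring
    exact Nat.eq_of_mul_eq_mul_left hq.pos this
  -- count Sylow q-subgroups
  have hdvd : Nat.card (Sylow q G) ∣ p := hindex ▸ P.card_dvd_index
  have hmod : Nat.card (Sylow q G) ≡ 1 [MOD q] := card_sylow_modEq_one q G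
  have hone : Nat.card (Sylow q G) = 1 := by
    rcases (Nat.Prime.eq_one_or_self_of_dvd hp _ hdvd) with h1 | h1
    · exact h1
    · exfalso
      rw [h1] at hmod
      have : p % q = 1 % q := hmod
      rw [Nat.mod_eq_of_lt hlt, Nat.mod_eq_of_lt hq.one_lt] at this
      exact hp.one_lt.ne' this
  have hnormal : (P : Subgroup G).Normal := by
    apply Subgroup.normalizer_eq_top_iff.mp
    apply Subgroup.index_eq_one.mp
    rw [← hone]; exact P.card_eq_index_normalizer.symm
  haveI := hnormal
  haveI : Group.IsSolvable (P : Subgroup G) :=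
    solvable_of_card_prime_pow hq (P : Subgroup G) (by rw [hcardP, pow_one])
  haveI : Group.IsSolvable (G ⧸ (P : Subgroup G)) := by
    apply solvable_of_card_prime_pow hp (n := 1)
    rw [pow_one, ← Subgroup.index_eq_card, hindex]
  exact solvable_of_ker_le_range (P : Subgroup G).subtype (QuotientGroup.mk' (P : Subgroup G))
    (by rw [QuotientGroup.ker_mk', Subgroup.range_subtype])

/-- A group of order 12 is solvable. -/
lemma solvable_of_card_twelve (G : Type*) [Group G] (h : Nat.card G = 12) : Group.IsSolvable G := by
  haveI : Finite G := Nat.finite_of_card_ne_zero (h ▸ (by norm_num))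
  haveI : Fact (Nat.Prime 2) := ⟨by norm_num⟩
  obtain ⟨P⟩ : Nonempty (Sylow 2 G) := Sylow.nonempty
  have hcardP : Nat.card P = 4 := by
    rw [Sylow.card_eq_multiplicity, h]
    have h12 : (12:ℕ) = 2^2 * 3 := by norm_num
    rw [h12, Nat.factorization_mul (by norm_num) (by norm_num),
      Nat.Prime.factorization_pow (by norm_num : Nat.Prime 2),
      Nat.Prime.factorization (by norm_num : Nat.Prime 3)]
    simp
  have hindex : (P : Subgroup G).index = 3 := by
    have hmul := (P : Subgroup G).card_mul_index
    rw [show Nat.card (P : Subgroup G) = 4 from hcardP, h] at hmul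
    omega
  set K : Subgroup G := (P : Subgroup G).normalCore with hK
  have hker : K = (MulAction.toPermHom G (G ⧸ (P : Subgroup G))).ker :=
    Subgroup.normalCore_eq_ker _
  haveI : Group.IsSolvable K := by
    have hKP : IsPGroup 2 K := P.isPGroup'.to_le (Subgroup.normalCore_le _)
    obtain ⟨k, hk⟩ := IsPGroup.iff_card.mp hKP
    exact solvable_of_card_prime_pow (by norm_num : Nat.Prime 2) K hk
  haveI : Group.IsSolvable (Equiv.Perm (G ⧸ (P : Subgroup G))) := by
    apply solvable_of_card_pq (by norm_num : Nat.Prime 2) (by norm_num : Nat.Prime 3)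
      (by norm_num)
    have h3 : Nat.card (G ⧸ (P : Subgroup G)) = 3 := by
      rw [← Subgroup.index_eq_card, hindex]
    haveI : Finite (G ⧸ (P : Subgroup G)) := Nat.finite_of_card_ne_zero (by rw [h3]; norm_num)
    haveI : DecidableEq (G ⧸ (P : Subgroup G)) := Classical.decEq _
    haveI : Fintype (G ⧸ (P : Subgroup G)) := Fintype.ofFinite _
    rw [Nat.card_eq_fintype_card, Fintype.card_perm, ← Nat.card_eq_fintype_card, h3]
    decide
  exact solvable_of_ker_le_range K.subtype (MulAction.toPermHom G (G ⧸ (P : Subgroup G)))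
    (by rw [← hker, Subgroup.range_subtype])

/-- Every group of order at most 16 is solvable. -/
lemma solvable_of_card_le_sixteen (G : Type*) [Group G] [Finite G]
    (h : Nat.card G ≤ 16) : Group.IsSolvable G := by
  obtain ⟨n, hn⟩ : ∃ n, Nat.card G = n := ⟨_, rfl⟩
  have h1 : 1 ≤ n := hn ▸ Nat.card_pos
  have h16 : n ≤ 16 := hn ▸ h
  interval_cases n
  · haveI : Subsingleton G := by
      have := Nat.card_eq_one_iff_unique.mp hn
      exact this.1
    infer_instance
  · exact solvable_of_card_prime_pow (p := 2) (n := 1) (by norm_num) G (by simpa using hn)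
  · exact solvable_of_card_prime_pow (p := 3) (n := 1) (by norm_num) G (by simpa using hn)
  · exact solvable_of_card_prime_pow (p := 2) (n := 2) (by norm_num) G (by simpa using hn)
  · exact solvable_of_card_prime_pow (p := 5) (n := 1) (by norm_num) G (by simpa using hn)
  · exact solvable_of_card_pq (p := 2) (q := 3) (by norm_num) (by norm_num) (by norm_num) G
      (by simpa using hn)
  · exact solvable_of_card_prime_pow (p := 7) (n := 1) (by norm_num) G (by simpa using hn)
  · exact solvable_of_card_prime_pow (p := 2) (n := 3) (by norm_num) G (by simpa using hn)
  · exact solvable_of_card_prime_pow (p := 3) (n := 2) (by norm_num) G (by simpa using hn)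
  · exact solvable_of_card_pq (p := 2) (q := 5) (by norm_num) (by norm_num) (by norm_num) G
      (by simpa using hn)
  · exact solvable_of_card_prime_pow (p := 11) (n := 1) (by norm_num) G (by simpa using hn)
  · exact solvable_of_card_twelve G hn
  · exact solvable_of_card_prime_pow (p := 13) (n := 1) (by norm_num) G (by simpa using hn)
  · exact solvable_of_card_pq (p := 2) (q := 7) (by norm_num) (by norm_num) (by norm_num) G
      (by simpa using hn)
  · exact solvable_of_card_pq (p := 3) (q := 5) (by norm_num) (by norm_num) (by norm_num) G
      (by simpa using hn)
  · exact solvable_of_card_prime_pow (p := 2) (n := 4) (by norm_num) G (by simpa using hn)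

theorem normalClosure_eq_top_of_index_between_two_and_sixteen
    (H : Subgroup Gbar) (h2 : 2 ≤ H.index) (h16 : H.index ≤ 16) :
    Subgroup.normalClosure (H : Set Gbar) = ⊤ := by
  set N := Subgroup.normalClosure (H : Set Gbar) with hN
  haveI : N.Normal := Subgroup.normalClosure_normal
  have hHN : H ≤ N := fun x hx => Subgroup.subset_normalClosure hx
  have hdvd : N.index ∣ H.index := Subgroup.index_dvd_of_le hHN
  have hHne : H.index ≠ 0 := by omega
  have hNne : N.index ≠ 0 := by
    intro h0
    rw [h0] at hdvd
    exact hHne (Nat.eq_zero_of_zero_dvd hdvd)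
  have hNle : N.index ≤ 16 := le_trans (Nat.le_of_dvd (by omega) hdvd) h16
  set Q := Gbar ⧸ N with hQ
  haveI : Finite Q := by
    apply Nat.finite_of_card_ne_zero
    rwa [← Subgroup.index_eq_card]
  -- Q is perfect
  have hperf : commutator Q = ⊤ := by
    rw [eq_top_iff]
    intro q _
    obtain ⟨g, rfl⟩ := QuotientGroup.mk'_surjective N q
    have key : (Abelianization.of.comp (QuotientGroup.mk' N)) g = 1 :=
      hom_to_comm_trivial _ g
    have : Abelianization.of (QuotientGroup.mk' N g) = 1 := key
    exact (QuotientGroup.eq_one_iff (QuotientGroup.mk' N g)).mp this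
  haveI : Group.IsSolvable Q := solvable_of_card_le_sixteen Q
    (by rw [← Subgroup.index_eq_card]; exact hNle)
  haveI : Subsingleton Q := subsingleton_of_solvable_perfect Q hperf
  have : N.index = 1 := by
    rw [Subgroup.index_eq_card]
    exact Nat.card_eq_one_iff_unique.mpr ⟨inferInstance, ⟨1⟩⟩
  exact Subgroup.index_eq_one.mp this

end Stmt9
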